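/- arXiv:1603.04681 — 2 statements merged into one kernel-verified Lean document; each statement's English description precedes it below -/
import Mathlib

section
/- Let C and D be pretriangulated categories. Let G : C ⥤ D and L : D ⥤ C be additive functors, each equipped with a natural isomorphism commuting it with the shift functors and sending distinguished triangles to distinguished triangles (triangulated functors). Suppose there are natural transformations s : 𝟭_C ⟶ G ⋙ L and e : (G ⋙ L) ⟶ 𝟭_C, both compatible with the shift-commutation isomorphisms, such that s ≫ e = 𝟙. Then a triangle T in C is distinguished if and only if the triangle G(T) in D — obtained by applying G to the three objects and three morphisms of T, composing the third morphism with the isomorphism G(X⟦1⟧) ≅ (G X)⟦1⟧ — is distinguished in D. -/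
/-!
The split unit `s ≫ e = 𝟙` makes `T` a retract, in the category of triangles, of
`(G ⋙ L).mapTriangle.obj T`, which is distinguished as soon as `G.mapTriangle.obj T` is.
So it suffices that a retract `T` of a distinguished triangle is distinguished. Complete `T.mor₁`
to a distinguished triangle `T''`; by TR3 through the ambient triangle there are morphisms
`T'' ⟶ T ⟶ T''` which are identities on the first two objects. On `T''` the composite is an
isomorphism by the five lemma. On `T` its third component is `𝟙 + ε` where `ε` is killed by
`T.mor₂` and `T.mor₃`; as `T` inherits exactness at its third object from the ambient triangle,
`ε` factors through `T.mor₂`, hence `ε ≫ ε = 0` and `𝟙 + ε` is invertible.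
-/

open CategoryTheory Category Limits Preadditive Pretriangulated

namespace CategoryTheory

lemma IsIso.of_isIso_comp_of_isIso_comp_swap {C : Type*} [Category C] {X Y : C} (f : X ⟶ Y)
    (g : Y ⟶ X) [IsIso (f ≫ g)] [IsIso (g ≫ f)] : IsIso f :=
  have : Mono f := mono_of_mono f g
  have : IsSplitEpi f := IsSplitEpi.mk' ⟨inv (g ≫ f) ≫ g, by simp⟩
  isIso_of_mono_of_isSplitEpi f

section

variable {C D : Type*} [Category C] [Category D] [HasShift C ℤ] [HasShift D ℤ]
  {F₁ F₂ : C ⥤ D} [F₁.CommShift ℤ] [F₂.CommShift ℤ]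

def NatTrans.mapTriangle (α : F₁ ⟶ F₂) [NatTrans.CommShift α ℤ] :
    F₁.mapTriangle ⟶ F₂.mapTriangle where
  app T :=
    { hom₁ := α.app T.obj₁
      hom₂ := α.app T.obj₂
      hom₃ := α.app T.obj₃
      comm₁ := α.naturality T.mor₁
      comm₂ := α.naturality T.mor₂
      comm₃ := by
        change (F₁.map T.mor₃ ≫ (F₁.commShiftIso (1 : ℤ)).hom.app T.obj₁) ≫
            (α.app T.obj₁)⟦(1 : ℤ)⟧' =
          α.app T.obj₃ ≫ F₂.map T.mor₃ ≫ (F₂.commShiftIso (1 : ℤ)).hom.app T.obj₁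
        rw [assoc, NatTrans.shift_app_comm α (1 : ℤ) T.obj₁, α.naturality_assoc] }
  naturality _ _ f := by ext <;> exact α.naturality _

def Retract.mapTriangle (h : Retract F₁ F₂) [NatTrans.CommShift h.i ℤ]
    [NatTrans.CommShift h.r ℤ] : Retract F₁.mapTriangle F₂.mapTriangle where
  i := NatTrans.mapTriangle h.i
  r := NatTrans.mapTriangle h.r
  retract := by ext T <;> exact NatTrans.congr_app h.retract _

end

namespace Pretriangulated

variable {C : Type*} [Category C] [Preadditive C] [HasZeroObject C] [HasShift C ℤ]
  [∀ n : ℤ, (shiftFunctor C n).Additive] [Pretriangulated C] {T T' : Triangle C}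

lemma coyoneda_exact₃_of_retract (h : Retract T T') (hT' : T' ∈ distTriang C)
    {A : C} (f : A ⟶ T.obj₃) (hf : f ≫ T.mor₃ = 0) : ∃ g : A ⟶ T.obj₂, f = g ≫ T.mor₂ := by
  obtain ⟨g, hg⟩ := T'.coyoneda_exact₃ hT' (f ≫ h.i.hom₃)
    (by rw [assoc, ← h.i.comm₃, reassoc_of% hf, zero_comp])
  refine ⟨g ≫ h.r.hom₂, ?_⟩
  have hir : h.i.hom₃ ≫ h.r.hom₃ = 𝟙 _ := congrArg TriangleMorphism.hom₃ h.retract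
  calc f = f ≫ h.i.hom₃ ≫ h.r.hom₃ := by rw [hir, comp_id]
    _ = g ≫ h.r.hom₂ ≫ T.mor₂ := by rw [reassoc_of% hg, h.r.comm₂]
    _ = (g ≫ h.r.hom₂) ≫ T.mor₂ := by rw [assoc]

lemma isIso_hom₃_of_retract (h : Retract T T') (hT' : T' ∈ distTriang C) (φ : T ⟶ T)
    (h₁ : φ.hom₁ = 𝟙 _) (h₂ : φ.hom₂ = 𝟙 _) : IsIso φ.hom₃ := by
  set ε := φ.hom₃ - 𝟙 _
  have hε₂ : T.mor₂ ≫ ε = 0 := by simp [ε, comp_sub, φ.comm₂, h₂]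
  have hε₃ : ε ≫ T.mor₃ = 0 := by
    rw [sub_comp, ← φ.comm₃, h₁, Functor.map_id, comp_id, id_comp, sub_self]
  obtain ⟨g, hg⟩ := coyoneda_exact₃_of_retract h hT' ε hε₃
  have hεε : ε ≫ ε = 0 := by nth_rw 1 [hg]; rw [assoc, hε₂, comp_zero]
  have hφ : φ.hom₃ = 𝟙 _ + ε := by simp [ε]
  rw [hφ]
  exact ⟨𝟙 _ - ε, by simp [comp_sub, add_comp, hεε], by simp [comp_add, sub_comp, hεε]⟩

lemma distinguished_of_retract (h : Retract T T') (hT' : T' ∈ distTriang C) :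
    T ∈ distTriang C := by
  obtain ⟨Z, g, k, hT''⟩ := distinguished_cocone_triangle T.mor₁
  -- a structure literal rather than `Triangle.mk`, so that `T''.obj₁` is reducibly `T.obj₁`
  let T'' : Triangle C := ⟨T.obj₁, T.obj₂, Z, T.mor₁, g, k⟩
  change T'' ∈ distTriang C at hT''
  let ψ : T'' ⟶ T :=
    completeDistinguishedTriangleMorphism _ _ hT'' hT' h.i.hom₁ h.i.hom₂ h.i.comm₁ ≫ h.r
  let χ : T ⟶ T'' :=
    h.i ≫ completeDistinguishedTriangleMorphism _ _ hT' hT'' h.r.hom₁ h.r.hom₂ h.r.comm₁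
  have hψ₁ : ψ.hom₁ = 𝟙 _ := congrArg TriangleMorphism.hom₁ h.retract
  have hψ₂ : ψ.hom₂ = 𝟙 _ := congrArg TriangleMorphism.hom₂ h.retract
  have hχ₁ : χ.hom₁ = 𝟙 _ := congrArg TriangleMorphism.hom₁ h.retract
  have hχ₂ : χ.hom₂ = 𝟙 _ := congrArg TriangleMorphism.hom₂ h.retract
  have : IsIso (ψ ≫ χ) := by
    refine Triangle.isIso_of_isIsos _ ?_ ?_ (isIso₃_of_isIso₁₂ _ hT'' hT'' ?_ ?_) <;>
      simp only [comp_hom₁, comp_hom₂, hψ₁, hψ₂, hχ₁, hχ₂, comp_id] <;> infer_instance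
  have : IsIso (χ ≫ ψ) := by
    refine Triangle.isIso_of_isIsos _ ?_ ?_ (isIso_hom₃_of_retract h hT' _ ?_ ?_) <;>
      simp only [comp_hom₁, comp_hom₂, hψ₁, hψ₂, hχ₁, hχ₂, comp_id] <;> infer_instance
  have : IsIso ψ := IsIso.of_isIso_comp_of_isIso_comp_swap ψ χ
  exact isomorphic_distinguished _ hT'' _ (asIso ψ).symm

end Pretriangulated
end CategoryTheory

/-- Let `G : C ⥤ D` and `L : D ⥤ C` be triangulated functors between pretriangulated
categories. If there are natural transformations `s : 𝟭 C ⟶ G ⋙ L` and `e : G ⋙ L ⟶ 𝟭 C`,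
both compatible with the shifts, such that `s ≫ e = 𝟙`, then a triangle `T` of `C` is
distinguished if and only if its image `G.mapTriangle.obj T` is distinguished in `D`. -/
theorem distinguished_iff_map_distinguished_of_split_unit
    {C D : Type*} [Category C] [Category D]
    [Preadditive C] [Limits.HasZeroObject C] [HasShift C ℤ]
    [∀ n : ℤ, (shiftFunctor C n).Additive] [Pretriangulated C]
    [Preadditive D] [Limits.HasZeroObject D] [HasShift D ℤ]
    [∀ n : ℤ, (shiftFunctor D n).Additive] [Pretriangulated D]
    (G : C ⥤ D) (L : D ⥤ C) [G.Additive] [L.Additive]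
    [G.CommShift ℤ] [L.CommShift ℤ] [G.IsTriangulated] [L.IsTriangulated]
    (s : 𝟭 C ⟶ G ⋙ L) (e : G ⋙ L ⟶ 𝟭 C)
    [NatTrans.CommShift s ℤ] [NatTrans.CommShift e ℤ]
    (hse : s ≫ e = 𝟙 (𝟭 C)) (T : Triangle C) :
    (T ∈ distTriang C) ↔ G.mapTriangle.obj T ∈ distTriang D := by
  refine ⟨G.map_distinguished T, fun hT ↦ ?_⟩
  let split : Retract (𝟭 C) (G ⋙ L) := ⟨s, e, hse⟩
  have hGLT : (G ⋙ L).mapTriangle.obj T ∈ distTriang C :=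
    isomorphic_distinguished _ (L.map_distinguished _ hT) _
      ((Functor.mapTriangleCompIso G L).app T)
  exact distinguished_of_retract (((Functor.mapTriangleIdIso C).symm.retract.trans
    split.mapTriangle).map ((evaluation _ _).obj T)) hGLT
end

section
/- Let R be a commutative ring and S a commutative R-algebra. Suppose the multiplication map μ : S ⊗[R] S → S admits an R-linear section σ : S → S ⊗[R] S (i.e., μ ∘ σ = id_S) which is a map of S-bimodules, meaning σ(a * s) = (a ⊗ 1) * σ(s) and σ(a * s) = (1 ⊗ a) * σ(s) for all a, s ∈ S. Then there is a family of S-linear maps s_X : X → S ⊗[R] X, one for each S-module X (where S ⊗[R] X is an S-module through the left tensor factor and X is regarded as an R-module by restriction of scalars along R → S), such that ε_X ∘ s_X = id_X, where ε_X : S ⊗[R] X → X is the S-linear action map determined by s ⊗ x ↦ s • x, and such that for every S-linear map f : X → Y one has (id_S ⊗ f) ∘ s_X = s_Y ∘ f (naturality). -/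
/-!
The element `e = σ 1 = ∑ aᵢ ⊗ bᵢ` is a separability idempotent: `μ e = 1` and
`(a ⊗ 1) e = σ a = (1 ⊗ a) e`. The splitting is `x ↦ ∑ aᵢ ⊗ bᵢ • x`. Moving `a` across the
tensor sign by the second identity makes it `S`-linear, `μ e = 1` makes it a section of the
counit, and it is natural because an `S`-linear `f` commutes with the action of the `bᵢ`.
-/

open TensorProduct

universe u v w

/-- For an `S`-module `X` (with compatible `R`-module structure by restriction of scalars
along `R → S`), the counit `ε_X : S ⊗[R] X →ₗ[S] X` is the `S`-linear action map
determined by `s ⊗ x ↦ s • x`. -/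
noncomputable def tensorCounit (R : Type u) (S : Type v) [CommRing R] [CommRing S]
    [Algebra R S] (X : Type w) [AddCommGroup X] [Module R X] [Module S X]
    [IsScalarTower R S X] : S ⊗[R] X →ₗ[S] X :=
  LinearMap.liftBaseChange S (LinearMap.id : X →ₗ[R] X)

namespace TensorProduct

variable {R S X : Type*} [CommRing R] [CommRing S] [Algebra R S]
  [AddCommGroup X] [Module R X] [Module S X] [IsScalarTower R S X]

noncomputable def rightSmul : S ⊗[R] S →ₗ[R] X →ₗ[R] S ⊗[R] X :=
  curry (((tensorCounit R S X).restrictScalars R).lTensor S ∘ₗ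
    (TensorProduct.assoc R S S X).toLinearMap)

@[simp]
lemma rightSmul_tmul (a b : S) (x : X) : rightSmul (a ⊗ₜ[R] b) x = a ⊗ₜ[R] (b • x) := by
  simp [rightSmul, tensorCounit]

lemma rightSmul_tmul_one_mul (a : S) (e : S ⊗[R] S) (x : X) :
    rightSmul ((a ⊗ₜ[R] (1 : S)) * e) x = a • rightSmul e x := by
  induction e using TensorProduct.induction_on with
  | zero => simp
  | tmul b c => simp [smul_tmul']
  | add e e' he he' => simp only [mul_add, map_add, LinearMap.add_apply, he, he', smul_add]

lemma rightSmul_one_tmul_mul (a : S) (e : S ⊗[R] S) (x : X) :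
    rightSmul (((1 : S) ⊗ₜ[R] a) * e) x = rightSmul e (a • x) := by
  induction e using TensorProduct.induction_on with
  | zero => simp
  | tmul b c => simp [smul_smul, mul_comm]
  | add e e' he he' => simp only [mul_add, map_add, LinearMap.add_apply, he, he']

lemma tensorCounit_rightSmul (e : S ⊗[R] S) (x : X) :
    tensorCounit R S X (rightSmul e x) = LinearMap.mul' R S e • x := by
  induction e using TensorProduct.induction_on with
  | zero => simp
  | tmul b c => simp [tensorCounit, mul_smul]
  | add e e' he he' => simp only [map_add, LinearMap.add_apply, he, he', add_smul]

lemma baseChange_rightSmul {Y : Type*} [AddCommGroup Y] [Module R Y] [Module S Y]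
    [IsScalarTower R S Y] (f : X →ₗ[S] Y) (e : S ⊗[R] S) (x : X) :
    (f.restrictScalars R).baseChange S (rightSmul e x) = rightSmul e (f x) := by
  induction e using TensorProduct.induction_on with
  | zero => simp
  | tmul b c => simp
  | add e e' he he' => simp only [map_add, LinearMap.add_apply, he, he']

noncomputable def rightSmulOfBalanced (e : S ⊗[R] S)
    (he : ∀ a : S, (a ⊗ₜ[R] (1 : S)) * e = ((1 : S) ⊗ₜ[R] a) * e) : X →ₗ[S] S ⊗[R] X where
  toFun := rightSmul e
  map_add' := map_add _
  map_smul' a x := by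
    rw [RingHom.id_apply, ← rightSmul_one_tmul_mul, ← he, rightSmul_tmul_one_mul]

end TensorProduct

/-- If the multiplication map `μ = LinearMap.mul' R S : S ⊗[R] S → S` of a commutative
`R`-algebra `S` admits an `R`-linear section `σ` which is a map of `S`-bimodules, then
there is a family of `S`-linear maps `s_X : X → S ⊗[R] X`, natural in the `S`-module `X`,
splitting the counit `ε_X : S ⊗[R] X → X`. -/
theorem exists_natural_splitting_of_separable
    {R : Type u} {S : Type v} [CommRing R] [CommRing S] [Algebra R S]
    (σ : S →ₗ[R] S ⊗[R] S)
    (hσμ : ∀ t : S, LinearMap.mul' R S (σ t) = t)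
    (hleft : ∀ a t : S, σ (a * t) = (a ⊗ₜ[R] (1 : S)) * σ t)
    (hright : ∀ a t : S, σ (a * t) = ((1 : S) ⊗ₜ[R] a) * σ t) :
    ∃ s : ∀ (X : Type w) [AddCommGroup X] [Module R X] [Module S X] [IsScalarTower R S X],
        X →ₗ[S] S ⊗[R] X,
      (∀ (X : Type w) [AddCommGroup X] [Module R X] [Module S X] [IsScalarTower R S X],
        (tensorCounit R S X).comp (s X) = LinearMap.id) ∧
      (∀ (X Y : Type w) [AddCommGroup X] [Module R X] [Module S X] [IsScalarTower R S X]
          [AddCommGroup Y] [Module R Y] [Module S Y] [IsScalarTower R S Y] (f : X →ₗ[S] Y),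
        (LinearMap.baseChange S (f.restrictScalars R)).comp (s X) = (s Y).comp f) := by
  have hbalanced : ∀ a : S, (a ⊗ₜ[R] (1 : S)) * σ 1 = ((1 : S) ⊗ₜ[R] a) * σ 1 := fun a => by
    rw [← hleft, hright]
  refine ⟨fun X _ _ _ _ => rightSmulOfBalanced (σ 1) hbalanced, fun X _ _ _ _ => ?_,
    fun X Y _ _ _ _ _ _ _ _ f => ?_⟩
  · ext x
    change tensorCounit R S X (rightSmul (σ 1) x) = x
    rw [tensorCounit_rightSmul, hσμ, one_smul]
  · ext x
    exact baseChange_rightSmul f (σ 1) x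
end
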